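/- Let V be a vector space over K ∈ {ℝ, ℂ} with m := dim V < ∞, a fixed complete flag {0} = V₀ ⊊ ⋯ ⊊ V_m = V, B ∈ (∧²V)* ∖ {0}, and let d be the unique integer in {1, …, m} such that p^{d−1}(B) is not B-isotropic while p^d(B) is B-isotropic (where p^k(B) is the inductively defined sequence p⁰(B) := V, p^{k+1}(B) := (V_{i_{k+1}} ∩ p^k(B))^{⊥_B} ∩ p^k(B) with i_{k+1} := min{i : V_i ∩ p^k(B) ⊬_B p^k(B)}). Then d = dim(V/p(B)) = (1/2)·dim(V/N(B)) and p^d(B) = p(B), where p(B) := N(B|_{V₁×V₁}) + ⋯ + N(B|_{V_m×V_m}); in particular p^d(B) is a Lagrangian subspace for B. -/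

import Mathlib

open Module Filter Topology

noncomputable section

variable {𝕜 : Type} [RCLike 𝕜]

noncomputable instance grassmannianTopology {V : Type} [NormedAddCommGroup V]
    [InnerProductSpace 𝕜 V] [FiniteDimensional 𝕜 V] : TopologicalSpace (Submodule 𝕜 V) :=
  TopologicalSpace.induced
    (fun W : Submodule 𝕜 V => (W.subtypeL.comp (Submodule.orthogonalProjection W) : V →L[𝕜] V))
    inferInstance

variable {V : Type} [NormedAddCommGroup V] [InnerProductSpace 𝕜 V] [FiniteDimensional 𝕜 V]

/-- `B` is a skew-symmetric bilinear form. -/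
def IsSkew (B : V →L[𝕜] V →L[𝕜] 𝕜) : Prop := ∀ x y, B x y = - B y x

/-- `S^{⊥_B}`. -/
def perpB (B : V →L[𝕜] V →L[𝕜] 𝕜) (S : Submodule 𝕜 V) : Submodule 𝕜 V where
  carrier := {w | ∀ v ∈ S, B v w = 0}
  add_mem' := by
    intro a b ha hb v hv
    simp [map_add, ha v hv, hb v hv]
  zero_mem' := by
    intro v hv
    simp
  smul_mem' := by
    intro c w hw v hv
    simp [hw v hv]

/-- The null space `N(B)`. -/
def nullSpace (B : V →L[𝕜] V →L[𝕜] 𝕜) : Submodule 𝕜 V := perpB B ⊤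

/-- `S ⊥_B T`. -/
def IsOrthoPair (B : V →L[𝕜] V →L[𝕜] 𝕜) (S T : Submodule 𝕜 V) : Prop :=
  ∀ v ∈ S, ∀ w ∈ T, B v w = 0

/-- `W` is a `B`-isotropic subspace. -/
def IsIsotropic (B : V →L[𝕜] V →L[𝕜] 𝕜) (W : Submodule 𝕜 V) : Prop := IsOrthoPair B W W


/-- `N(B_j)`, the null space of the restriction of `B` to `W × W`, regarded as a subspace
of `V`. -/
def nullIn (B : V →L[𝕜] V →L[𝕜] 𝕜) (W : Submodule 𝕜 V) : Submodule 𝕜 V :=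
  perpB B W ⊓ W

/-- The index `i_{k+1} := min {i : V_i ∩ P ⊬_B P}` from the inductive construction, where
`P` stands for `p^k(B)` and the flag is encoded as `Vn : ℕ → Submodule 𝕜 V` (constantly
`V` beyond `m`). -/
noncomputable def iIdx (B : V →L[𝕜] V →L[𝕜] 𝕜) (Vn : ℕ → Submodule 𝕜 V)
    (P : Submodule 𝕜 V) : ℕ :=
  sInf {i : ℕ | ¬ IsOrthoPair B (Vn i ⊓ P) P}

/-- One step of the inductive construction:
`p^{k+1}(B) := (V_{i_{k+1}} ∩ p^k(B))^{⊥_B} ∩ p^k(B)`. -/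
noncomputable def pStep (B : V →L[𝕜] V →L[𝕜] 𝕜) (Vn : ℕ → Submodule 𝕜 V)
    (P : Submodule 𝕜 V) : Submodule 𝕜 V :=
  perpB B (Vn (iIdx B Vn P) ⊓ P) ⊓ P

/-- The sequence `p⁰(B) = V, p¹(B), p²(B), …` of the inductive construction. -/
noncomputable def pSeq (B : V →L[𝕜] V →L[𝕜] 𝕜) (Vn : ℕ → Submodule 𝕜 V) :
    ℕ → Submodule 𝕜 V
  | 0 => ⊤
  | k + 1 => pStep B Vn (pSeq B Vn k)

/-- The index `j_{k+1} := min {j : V_j ∩ p^k(B) ⊄ p^{k+1}(B)}`, where `P` stands for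
`p^k(B)`. -/
noncomputable def jIdx (B : V →L[𝕜] V →L[𝕜] 𝕜) (Vn : ℕ → Submodule 𝕜 V)
    (P : Submodule 𝕜 V) : ℕ :=
  sInf {j : ℕ | ¬ Vn j ⊓ P ≤ pStep B Vn P}

/-- The jump set `jump W := {j ∈ {1, …, m} : V_j ⊄ V_{j-1} + W}`. -/
def jumpSetN (m : ℕ) (Vn : ℕ → Submodule 𝕜 V) (W : Submodule 𝕜 V) : Set ℕ :=
  {j | 1 ≤ j ∧ j ≤ m ∧ ¬ Vn j ≤ Vn (j - 1) ⊔ W}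

/-- The subspace `p(B) := N(B₁) + ⋯ + N(B_m)` where `B_j := B|_{V_j × V_j}`. -/
noncomputable def lagSumN (m : ℕ) (Vn : ℕ → Submodule 𝕜 V) (B : V →L[𝕜] V →L[𝕜] 𝕜) :
    Submodule 𝕜 V :=
  ∑ j ∈ Finset.Icc 1 m, nullIn B (Vn j)

/-! ### Auxiliary lemmas -/

section AuxLemmas

variable (B : V →L[𝕜] V →L[𝕜] 𝕜)

lemma mem_perpB {S : Submodule 𝕜 V} {w : V} : w ∈ perpB B S ↔ ∀ v ∈ S, B v w = 0 := Iff.rfl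

lemma mem_nullIn {W : Submodule 𝕜 V} {x : V} :
    x ∈ nullIn B W ↔ (∀ v ∈ W, B v x = 0) ∧ x ∈ W := Iff.rfl

variable {B}

lemma skew_self (hB : IsSkew B) (x : V) : B x x = 0 := by
  have h := hB x x
  have h2 : (2 : 𝕜) * B x x = 0 := by rw [two_mul]; nth_rewrite 1 [h]; ring
  exact (mul_eq_zero.mp h2).resolve_left two_ne_zero

lemma nullIn_le {W : Submodule 𝕜 V} : nullIn B W ≤ W := inf_le_right

/-- Hyperplane lemma: intersecting with the kernel of a functional that is nonzero on `P`
drops the dimension by exactly one. -/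
lemma finrank_inf_ker (P : Submodule 𝕜 V) (f : V →L[𝕜] 𝕜) (h : ∃ x ∈ P, f x ≠ 0) :
    finrank 𝕜 ↥(P ⊓ LinearMap.ker (f : V →ₗ[𝕜] 𝕜)) + 1 = finrank 𝕜 ↥P := by
  obtain ⟨x, hxP, hfx⟩ := h
  set g : ↥P →ₗ[𝕜] 𝕜 := (f : V →ₗ[𝕜] 𝕜).domRestrict P with hg
  have hrange : LinearMap.range g = ⊤ := by
    rw [LinearMap.range_eq_top]
    intro c
    refine ⟨(c / f x) • ⟨x, hxP⟩, ?_⟩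
    simp only [hg, LinearMap.domRestrict_apply, SetLike.val_smul, map_smul, smul_eq_mul,
      ContinuousLinearMap.coe_coe]
    field_simp
  have hrn := g.finrank_range_add_finrank_ker
  rw [hrange, finrank_top, finrank_self] at hrn
  have hker : Submodule.map P.subtype (LinearMap.ker g) = P ⊓ LinearMap.ker (f : V →ₗ[𝕜] 𝕜) := by
    ext y
    constructor
    · rintro ⟨⟨y, hyP⟩, hy, rfl⟩
      exact ⟨hyP, hy⟩
    · rintro ⟨hyP, hyk⟩
      exact ⟨⟨y, hyP⟩, hyk, rfl⟩
  rw [← hker, Submodule.finrank_map_subtype_eq]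
  omega

lemma finrank_sup_span_singleton {X : Submodule 𝕜 V} {v : V} (hv : v ∉ X) :
    finrank 𝕜 ↥(X ⊔ (𝕜 ∙ v)) = finrank 𝕜 ↥X + 1 := by
  have hv0 : v ≠ 0 := fun h => hv (h ▸ X.zero_mem)
  have hdisj : X ⊓ (𝕜 ∙ v) = ⊥ := by
    rw [Submodule.eq_bot_iff]
    rintro y ⟨hyX, hyv⟩
    obtain ⟨c, rfl⟩ := Submodule.mem_span_singleton.mp hyv
    rcases eq_or_ne c 0 with rfl | hc
    · simp
    · exact absurd (by simpa [hc] using X.smul_mem c⁻¹ hyX) hv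
  have h := Submodule.finrank_sup_add_finrank_inf_eq X (𝕜 ∙ v)
  rw [hdisj, finrank_bot, finrank_span_singleton hv0] at h
  omega

section Flag

variable {m : ℕ} {Vn : ℕ → Submodule 𝕜 V}

lemma flag_sup (hmono : Monotone Vn) (hrank : ∀ j ≤ m, finrank 𝕜 ↥(Vn j) = j)
    {j : ℕ} (hj1 : 1 ≤ j) (hjm : j ≤ m) {v : V} (hv : v ∈ Vn j) (hv' : v ∉ Vn (j - 1)) :
    Vn j = Vn (j - 1) ⊔ (𝕜 ∙ v) := by
  have hle : Vn (j - 1) ⊔ (𝕜 ∙ v) ≤ Vn j :=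
    sup_le (hmono (by omega)) ((Submodule.span_singleton_le_iff_mem _ _).mpr hv)
  refine (Submodule.eq_of_le_of_finrank_le hle ?_).symm
  rw [finrank_sup_span_singleton hv', hrank (j - 1) (by omega), hrank j hjm]
  omega

lemma flag_decomp (hmono : Monotone Vn) (hrank : ∀ j ≤ m, finrank 𝕜 ↥(Vn j) = j)
    {j : ℕ} (hj1 : 1 ≤ j) (hjm : j ≤ m) {v : V} (hv : v ∈ Vn j) (hv' : v ∉ Vn (j - 1))
    {u : V} (hu : u ∈ Vn j) : ∃ h ∈ Vn (j - 1), ∃ c : 𝕜, u = h + c • v := by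
  rw [flag_sup hmono hrank hj1 hjm hv hv'] at hu
  obtain ⟨h, hh, z, hz, rfl⟩ := Submodule.mem_sup.mp hu
  obtain ⟨c, rfl⟩ := Submodule.mem_span_singleton.mp hz
  exact ⟨h, hh, c, rfl⟩

end Flag

lemma pStep_le (Vn : ℕ → Submodule 𝕜 V) (P : Submodule 𝕜 V) : pStep B Vn P ≤ P :=
  inf_le_right

lemma pStep_eq_of_isotropic {Vn : ℕ → Submodule 𝕜 V} {P : Submodule 𝕜 V}
    (h : IsIsotropic B P) : pStep B Vn P = P := by
  refine le_antisymm inf_le_right (le_inf ?_ le_rfl)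
  intro w hw v hv
  exact h v hv.2 w hw

/-- The key properties of one step of the inductive construction on a non-isotropic
subspace: the dimension drops by one, and the dimension of the radical grows by one. -/
lemma pStep_spec {m : ℕ} {Vn : ℕ → Submodule 𝕜 V}
    (hV0 : Vn 0 = ⊥) (hmono : Monotone Vn)
    (hrank : ∀ j ≤ m, finrank 𝕜 ↥(Vn j) = j) (htop : ∀ j, m ≤ j → Vn j = ⊤)
    (hB : IsSkew B) (P : Submodule 𝕜 V) (hP : ¬ IsIsotropic B P) :
    finrank 𝕜 ↥(pStep B Vn P) + 1 = finrank 𝕜 ↥P ∧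
    finrank 𝕜 ↥(nullIn B (pStep B Vn P)) = finrank 𝕜 ↥(nullIn B P) + 1 := by
  classical
  set S : Set ℕ := {i : ℕ | ¬ IsOrthoPair B (Vn i ⊓ P) P} with hS
  have hiDef : iIdx B Vn P = sInf S := rfl
  set i := iIdx B Vn P with hi
  have hmS : m ∈ S := by
    simp only [hS, Set.mem_setOf_eq, htop m le_rfl, top_inf_eq]
    exact hP
  have hiS : i ∈ S := hiDef ▸ Nat.sInf_mem ⟨m, hmS⟩
  have him : i ≤ m := hiDef ▸ Nat.sInf_le hmS
  have hi1 : 1 ≤ i := by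
    rcases Nat.eq_zero_or_pos i with h0 | h
    · exfalso
      apply hiS
      rw [h0, hV0, bot_inf_eq]
      intro v hv w hw
      simp [(Submodule.mem_bot 𝕜).mp hv]
    · exact h
  have hOrtho : IsOrthoPair B (Vn (i - 1) ⊓ P) P := by
    by_contra hc
    exact Nat.notMem_of_lt_sInf (hiDef ▸ Nat.sub_lt hi1 one_pos) hc
  have hiS' : ¬ ∀ v ∈ Vn i ⊓ P, ∀ w ∈ P, B v w = 0 := hiS
  push_neg at hiS'
  obtain ⟨v, hv, w, hw, hvw⟩ := hiS'
  have hvP : v ∈ P := hv.2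
  have hvVi : v ∈ Vn i := hv.1
  have hvnot : v ∉ Vn (i - 1) := fun hvi => hvw (hOrtho v ⟨hvi, hvP⟩ w hw)
  -- characterization of pStep as P ∩ ker (B v)
  have hchar : pStep B Vn P = P ⊓ LinearMap.ker (B v : V →ₗ[𝕜] 𝕜) := by
    ext x
    simp only [pStep, Submodule.mem_inf, LinearMap.mem_ker, ContinuousLinearMap.coe_coe]
    constructor
    · rintro ⟨h1, h2⟩
      exact ⟨h2, h1 v hv⟩
    · rintro ⟨hxP, hBvx⟩
      refine ⟨fun u hu => ?_, hxP⟩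
      obtain ⟨huVi, huP⟩ := hu
      obtain ⟨h, hh, c, rfl⟩ := flag_decomp hmono hrank hi1 him hvVi hvnot huVi
      have hhP : h ∈ P := by
        have := P.sub_mem huP (P.smul_mem c hvP)
        simpa using this
      have h1 : B h x = 0 := hOrtho h ⟨hh, hhP⟩ x hxP
      simp [map_add, h1, hBvx]
  have hd1 : finrank 𝕜 ↥(pStep B Vn P) + 1 = finrank 𝕜 ↥P := by
    rw [hchar]
    exact finrank_inf_ker P (B v) ⟨w, hw, hvw⟩
  refine ⟨hd1, ?_⟩
  have hnull : nullIn B (pStep B Vn P) = nullIn B P ⊔ (𝕜 ∙ v) := by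
    apply le_antisymm
    · intro x hx
      obtain ⟨hxperp, hxstep⟩ := hx
      have hxP : x ∈ P := (pStep_le Vn P) hxstep
      have hBvx : B v x = 0 := by
        rw [hchar] at hxstep
        exact hxstep.2
      set c := B w x / B v w with hc
      have key : x + c • v ∈ nullIn B P := by
        refine ⟨fun u huP => ?_, P.add_mem hxP (P.smul_mem c hvP)⟩
        set a := B v u / B v w with ha
        have hu' : u - a • w ∈ pStep B Vn P := by
          rw [hchar]
          refine ⟨P.sub_mem huP (P.smul_mem a hw), ?_⟩
          simp only [SetLike.mem_coe, LinearMap.mem_ker, ContinuousLinearMap.coe_coe, map_sub, map_smul, ContinuousLinearMap.coe_sub',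
            Pi.sub_apply, ContinuousLinearMap.coe_smul', Pi.smul_apply, smul_eq_mul, ha]
          field_simp
          ring
        have h0 : B (u - a • w) x = 0 := hxperp _ hu'
        have hBux : B u x = a * B w x := by
          have h0' : B u x - a * B w x = 0 := by
            simpa [map_sub, map_smul, smul_eq_mul] using h0
          linear_combination h0'
        have hskew : B u v = - B v u := hB u v
        have hexp : B u (x + c • v) = B u x + c * B u v := by
          simp [map_add, smul_eq_mul]
        rw [hexp, hBux, hskew, ha, hc]
        field_simp
        ring
      have hxeq : x = (x + c • v) - c • v := by abel
      rw [hxeq]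
      refine Submodule.sub_mem _ (Submodule.mem_sup_left key) (Submodule.mem_sup_right ?_)
      exact Submodule.smul_mem _ c (Submodule.mem_span_singleton_self v)
    · apply sup_le
      · rintro x ⟨hxperp, hxP⟩
        refine ⟨fun z hz => hxperp z ((pStep_le Vn P) hz), ?_⟩
        rw [hchar]
        exact ⟨hxP, hxperp v hvP⟩
      · rw [Submodule.span_singleton_le_iff_mem]
        refine ⟨fun z hz => ?_, ?_⟩
        · have hz' : B v z = 0 := by
            rw [hchar] at hz
            exact hz.2
          rw [hB z v, hz', neg_zero]
        · rw [hchar]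
          exact ⟨hvP, skew_self hB v⟩
  have hvnotnull : v ∉ nullIn B P := by
    intro h
    have h0 : B w v = 0 := h.1 w hw
    rw [hB w v, neg_eq_zero] at h0
    exact hvw h0
  rw [hnull, finrank_sup_span_singleton hvnotnull]

/-- The sum of each flag null space stays inside every step of the construction. -/
lemma nullIn_flag_le_pStep {Vn : ℕ → Submodule 𝕜 V} (hmono : Monotone Vn)
    (hB : IsSkew B) {P : Submodule 𝕜 V} {j : ℕ} (h : nullIn B (Vn j) ≤ P) :
    nullIn B (Vn j) ≤ pStep B Vn P := by
  set S : Set ℕ := {i : ℕ | ¬ IsOrthoPair B (Vn i ⊓ P) P} with hS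
  have hiDef : iIdx B Vn P = sInf S := rfl
  set i := iIdx B Vn P with hi
  intro x hx
  refine ⟨fun u hu => ?_, h hx⟩
  rcases le_or_gt i j with hij | hji
  · exact hx.1 u (hmono hij hu.1)
  · have hOrtho : IsOrthoPair B (Vn (i - 1) ⊓ P) P := by
      by_contra hc
      exact Nat.notMem_of_lt_sInf (hiDef ▸ (show i - 1 < i by omega)) hc
    have hxV : x ∈ Vn (i - 1) := hmono (by omega) hx.2
    have h0 : B x u = 0 := hOrtho x ⟨hxV, h hx⟩ u hu.2
    rw [hB u x, h0, neg_zero]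

lemma sum_le_submodule {s : Finset ℕ} {p : ℕ → Submodule 𝕜 V} {q : Submodule 𝕜 V}
    (h : ∀ i ∈ s, p i ≤ q) : ∑ i ∈ s, p i ≤ q := by
  classical
  induction s using Finset.induction_on with
  | empty => simp
  | insert _ _ hnot ih =>
    rename_i a s'
    rw [Finset.sum_insert hnot, Submodule.add_eq_sup]
    exact sup_le (h a (Finset.mem_insert_self a s'))
      (ih fun i hi => h i (Finset.mem_insert_of_mem hi))

/-- Evenness: for a skew form, `dim U + dim rad(B|U)` is even. -/
lemma even_finrank_add_nullIn (hB : IsSkew B) (U : Submodule 𝕜 V) :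
    Even (finrank 𝕜 ↥U + finrank 𝕜 ↥(nullIn B U)) := by
  generalize hN : finrank 𝕜 ↥U = N
  induction N using Nat.strong_induction_on generalizing U with
  | _ N IH =>
  by_cases hU : IsIsotropic B U
  · have hEq : nullIn B U = U :=
      le_antisymm inf_le_right (le_inf (fun x hx u hu => hU u hu x hx) le_rfl)
    rw [hEq, hN]
    exact ⟨N, rfl⟩
  · have hU' : ¬ ∀ v ∈ U, ∀ w ∈ U, B v w = 0 := hU
    push_neg at hU'
    obtain ⟨u, hu, w, hw, huw⟩ := hU'
    set U₁ := U ⊓ LinearMap.ker (B u : V →ₗ[𝕜] 𝕜) with hU₁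
    have h1 : finrank 𝕜 ↥U₁ + 1 = finrank 𝕜 ↥U := finrank_inf_ker U (B u) ⟨w, hw, huw⟩
    have huU₁ : u ∈ U₁ := ⟨hu, skew_self hB u⟩
    set U₂ := U₁ ⊓ LinearMap.ker (B w : V →ₗ[𝕜] 𝕜) with hU₂
    have hBwu : B w u ≠ 0 := by
      rw [hB w u, neg_ne_zero]
      exact huw
    have h2 : finrank 𝕜 ↥U₂ + 1 = finrank 𝕜 ↥U₁ := finrank_inf_ker U₁ (B w) ⟨u, huU₁, hBwu⟩
    have hU₂U : U₂ ≤ U := le_trans inf_le_left inf_le_left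
    have hnull : nullIn B U₂ = nullIn B U := by
      apply le_antisymm
      · rintro x ⟨hxperp, hx₂⟩
        refine ⟨fun z hz => ?_, hU₂U hx₂⟩
        have hBux : B u x = 0 := hx₂.1.2
        have hBwx : B w x = 0 := hx₂.2
        set a := -(B w z) / (B u w) with ha
        set b := (B u z) / (B u w) with hb
        have hz' : z - a • u - b • w ∈ U₂ := by
          refine ⟨⟨?_, ?_⟩, ?_⟩
          · exact U.sub_mem (U.sub_mem hz (U.smul_mem a hu)) (U.smul_mem b hw)
          · simp only [SetLike.mem_coe, LinearMap.mem_ker, ContinuousLinearMap.coe_coe, map_sub, map_smul, ContinuousLinearMap.coe_sub',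
              Pi.sub_apply, ContinuousLinearMap.coe_smul', Pi.smul_apply, smul_eq_mul,
              skew_self hB u, hb]
            field_simp
            simp [skew_self hB]
          · simp only [SetLike.mem_coe, LinearMap.mem_ker, ContinuousLinearMap.coe_coe, map_sub, map_smul, ContinuousLinearMap.coe_sub',
              Pi.sub_apply, ContinuousLinearMap.coe_smul', Pi.smul_apply, smul_eq_mul,
              skew_self hB w, ha, hB w u]
            field_simp
            ring
        have h0 : B (z - a • u - b • w) x = 0 := hxperp _ hz'
        have hexp : B z x = B (z - a • u - b • w) x + a * B u x + b * B w x := by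
          simp [map_sub, map_smul, smul_eq_mul]
          ring
        rw [hexp, h0, hBux, hBwx]
        ring
      · rintro x ⟨hxperp, hxU⟩
        exact ⟨fun z hz => hxperp z (hU₂U hz), ⟨hxU, hxperp u hu⟩, hxperp w hw⟩
    have hrec := IH (finrank 𝕜 ↥U₂) (by omega) U₂ rfl
    rw [hnull] at hrec
    obtain ⟨r, hr⟩ := hrec
    exact ⟨r + 1, by omega⟩

section FlagNullity

variable {m : ℕ} {Vn : ℕ → Submodule 𝕜 V}

lemma nullity_le_succ (hmono : Monotone Vn) (hrank : ∀ j ≤ m, finrank 𝕜 ↥(Vn j) = j)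
    {j : ℕ} (hj1 : 1 ≤ j) (hjm : j ≤ m) :
    finrank 𝕜 ↥(nullIn B (Vn j)) ≤ finrank 𝕜 ↥(nullIn B (Vn (j - 1))) + 1 := by
  have hle : nullIn B (Vn j) ⊓ Vn (j - 1) ≤ nullIn B (Vn (j - 1)) := by
    rintro x ⟨⟨hxperp, _⟩, hxV⟩
    exact ⟨fun u hu => hxperp u (hmono (by omega) hu), hxV⟩
  have hsup : nullIn B (Vn j) ⊔ Vn (j - 1) ≤ Vn j :=
    sup_le nullIn_le (hmono (by omega))
  have h1 := Submodule.finrank_sup_add_finrank_inf_eq (nullIn B (Vn j)) (Vn (j - 1))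
  have h2 : finrank 𝕜 ↥(nullIn B (Vn j) ⊔ Vn (j - 1)) ≤ j := by
    have := Submodule.finrank_mono hsup
    rwa [hrank j hjm] at this
  have h3 : finrank 𝕜 ↥(Vn (j - 1)) = j - 1 := hrank _ (by omega)
  have h4 := Submodule.finrank_mono hle
  omega

lemma nullity_ge_pred (hmono : Monotone Vn) (hrank : ∀ j ≤ m, finrank 𝕜 ↥(Vn j) = j)
    (hB : IsSkew B) {j : ℕ} (hj1 : 1 ≤ j) (hjm : j ≤ m) :
    finrank 𝕜 ↥(nullIn B (Vn (j - 1))) ≤ finrank 𝕜 ↥(nullIn B (Vn j)) + 1 := by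
  have hnotle : ¬ Vn j ≤ Vn (j - 1) := by
    intro h
    have := Submodule.finrank_mono h
    rw [hrank j hjm, hrank (j - 1) (by omega)] at this
    omega
  obtain ⟨v, hvj, hvj'⟩ := SetLike.not_le_iff_exists.mp hnotle
  have hkey : ∀ x ∈ nullIn B (Vn (j - 1)), B v x = 0 → x ∈ nullIn B (Vn j) := by
    rintro x ⟨hxperp, hxV⟩ hBvx
    refine ⟨fun u hu => ?_, hmono (by omega) hxV⟩
    obtain ⟨h, hh, c, rfl⟩ := flag_decomp hmono hrank hj1 hjm hvj hvj' hu
    have h1 : B h x = 0 := hxperp h hh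
    simp [map_add, h1, hBvx]
  by_cases hall : ∀ x ∈ nullIn B (Vn (j - 1)), B v x = 0
  · have hle : nullIn B (Vn (j - 1)) ≤ nullIn B (Vn j) :=
      fun x hx => hkey x hx (hall x hx)
    have := Submodule.finrank_mono hle
    omega
  · push_neg at hall
    obtain ⟨x₀, hx₀, hBvx₀⟩ := hall
    have hk : finrank 𝕜 ↥(nullIn B (Vn (j - 1)) ⊓ LinearMap.ker (B v : V →ₗ[𝕜] 𝕜)) + 1
        = finrank 𝕜 ↥(nullIn B (Vn (j - 1))) :=
      finrank_inf_ker _ (B v) ⟨x₀, hx₀, hBvx₀⟩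
    have hle : nullIn B (Vn (j - 1)) ⊓ LinearMap.ker (B v : V →ₗ[𝕜] 𝕜) ≤ nullIn B (Vn j) := by
      rintro x ⟨hx, hxk⟩
      exact hkey x hx hxk
    have := Submodule.finrank_mono hle
    omega

end FlagNullity

end AuxLemmas
/-- Let `d ∈ {1, …, m}` be the integer such that `p^{d-1}(B)` is not
`B`-isotropic while `p^d(B)` is `B`-isotropic. Then `d = dim (V / p(B))
= (1/2) dim (V / N(B))` and `p^d(B) = p(B) := N(B₁) + ⋯ + N(B_m)`; in particular
`p^d(B)` is a Lagrangian subspace for `B`. -/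
theorem pSeq_stop_eq_lagSum
    (m : ℕ) (hm : finrank 𝕜 V = m)
    (Vn : ℕ → Submodule 𝕜 V) (hV0 : Vn 0 = ⊥) (hmono : Monotone Vn)
    (hrank : ∀ j ≤ m, finrank 𝕜 (Vn j) = j) (htop : ∀ j, m ≤ j → Vn j = ⊤)
    (B : V →L[𝕜] V →L[𝕜] 𝕜) (hB : IsSkew B) (hB0 : B ≠ 0)
    (d : ℕ) (hd1 : 1 ≤ d) (hdm : d ≤ m)
    (hd2 : ¬ IsIsotropic B (pSeq B Vn (d - 1)))
    (hd3 : IsIsotropic B (pSeq B Vn d)) :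
    d = finrank 𝕜 (V ⧸ lagSumN m Vn B) ∧
    2 * d = finrank 𝕜 (V ⧸ nullSpace B) ∧
    pSeq B Vn d = lagSumN m Vn B ∧
    (IsIsotropic B (pSeq B Vn d) ∧
      ∀ W : Submodule 𝕜 V, IsIsotropic B W →
        finrank 𝕜 W ≤ finrank 𝕜 (pSeq B Vn d)) := by
  classical
  set n := finrank 𝕜 ↥(nullSpace B) with hn
  -- once isotropic, the sequence stabilizes
  have hstab : ∀ k, IsIsotropic B (pSeq B Vn k) → ∀ l, k ≤ l → pSeq B Vn l = pSeq B Vn k := by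
    intro k hk l
    induction l with
    | zero =>
      intro hl
      have hk0 : k = 0 := by omega
      subst hk0; rfl
    | succ l ih =>
      intro hl
      rcases Nat.lt_or_ge k (l + 1) with h | h
      · rw [show pSeq B Vn (l + 1) = pStep B Vn (pSeq B Vn l) from rfl, ih (by omega),
          pStep_eq_of_isotropic hk]
      · have : k = l + 1 := by omega
        subst this; rfl
  have hnoniso : ∀ k, k < d → ¬ IsIsotropic B (pSeq B Vn k) := by
    intro k hk hiso
    exact hd2 (by rw [hstab k hiso (d - 1) (by omega)]; exact hiso)
  -- the two dimension invariants of the construction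
  have hinv : ∀ k ≤ d, finrank 𝕜 ↥(pSeq B Vn k) + k = m ∧
      finrank 𝕜 ↥(nullIn B (pSeq B Vn k)) = n + k := by
    intro k
    induction k with
    | zero =>
      intro _
      have hnull : nullIn B (⊤ : Submodule 𝕜 V) = nullSpace B := by
        rw [nullIn, inf_top_eq]; rfl
      constructor
      · show finrank 𝕜 ↥(⊤ : Submodule 𝕜 V) + 0 = m
        rw [finrank_top, hm]
        omega
      · show finrank 𝕜 ↥(nullIn B (⊤ : Submodule 𝕜 V)) = n + 0
        rw [hnull]; omega
    | succ k ih =>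
      intro hk
      obtain ⟨h1, h2⟩ := ih (by omega)
      obtain ⟨hs1, hs2⟩ := pStep_spec hV0 hmono hrank htop hB (pSeq B Vn k)
        (hnoniso k (by omega))
      constructor
      · show finrank 𝕜 ↥(pStep B Vn (pSeq B Vn k)) + (k + 1) = m
        omega
      · show finrank 𝕜 ↥(nullIn B (pStep B Vn (pSeq B Vn k))) = n + (k + 1)
        omega
  obtain ⟨hfd, hnd⟩ := hinv d le_rfl
  have hiso_eq : nullIn B (pSeq B Vn d) = pSeq B Vn d :=
    le_antisymm inf_le_right (le_inf (fun x hx u hu => hd3 u hu x hx) le_rfl)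
  have hmn : m = n + 2 * d := by
    rw [hiso_eq] at hnd
    omega
  -- `lagSumN ≤ pSeq d`
  have hall : ∀ j k, nullIn B (Vn j) ≤ pSeq B Vn k := by
    intro j k
    induction k with
    | zero => exact le_top
    | succ k ih => exact nullIn_flag_le_pStep hmono hB ih
  have hlag_le : lagSumN m Vn B ≤ pSeq B Vn d :=
    sum_le_submodule fun j _ => hall j d
  -- the radical of the restriction to `Vn m = ⊤` is `nullSpace B`
  have hnVm : finrank 𝕜 ↥(nullIn B (Vn m)) = n := by
    rw [htop m le_rfl, show nullIn B (⊤ : Submodule 𝕜 V) = nullSpace B from by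
      rw [nullIn, inf_top_eq]; rfl]
  -- the nullity along the flag moves by exactly one at each step
  have hstep2 : ∀ j, 1 ≤ j → j ≤ m →
      finrank 𝕜 ↥(nullIn B (Vn j)) = finrank 𝕜 ↥(nullIn B (Vn (j - 1))) + 1 ∨
      finrank 𝕜 ↥(nullIn B (Vn (j - 1))) = finrank 𝕜 ↥(nullIn B (Vn j)) + 1 := by
    intro j hj1 hjm
    have hle := nullity_le_succ (B := B) hmono hrank hj1 hjm
    have hge := nullity_ge_pred hmono hrank hB hj1 hjm
    have he1 := even_finrank_add_nullIn hB (Vn j)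
    have he2 := even_finrank_add_nullIn hB (Vn (j - 1))
    rw [hrank j hjm] at he1
    rw [hrank (j - 1) (by omega)] at he2
    obtain ⟨r, hr⟩ := he1
    obtain ⟨s, hs⟩ := he2
    omega
  -- lower bound for the partial sums
  have hSrank : ∀ j ≤ m, j + finrank 𝕜 ↥(nullIn B (Vn j)) ≤
      2 * finrank 𝕜 ↥(∑ l ∈ Finset.Icc 1 j, nullIn B (Vn l)) := by
    intro j
    induction j with
    | zero =>
      intro _
      have hb : nullIn B (Vn 0) = ⊥ := le_bot_iff.mp (hV0 ▸ nullIn_le)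
      have he : (Finset.Icc 1 0 : Finset ℕ) = ∅ := by decide
      rw [hb, he]
      simp
    | succ j ih =>
      intro hjm
      have ihj := ih (by omega)
      have hsum : (∑ l ∈ Finset.Icc 1 (j + 1), nullIn B (Vn l)) =
          (∑ l ∈ Finset.Icc 1 j, nullIn B (Vn l)) + nullIn B (Vn (j + 1)) :=
        Finset.sum_Icc_succ_top (by omega) _
      have hle : (∑ l ∈ Finset.Icc 1 j, nullIn B (Vn l)) ≤
          ∑ l ∈ Finset.Icc 1 (j + 1), nullIn B (Vn l) := by
        rw [hsum, Submodule.add_eq_sup]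
        exact le_sup_left
      have hstep :
          finrank 𝕜 ↥(nullIn B (Vn (j + 1))) = finrank 𝕜 ↥(nullIn B (Vn j)) + 1 ∨
          finrank 𝕜 ↥(nullIn B (Vn j)) = finrank 𝕜 ↥(nullIn B (Vn (j + 1))) + 1 :=
        hstep2 (j + 1) (by omega) hjm
      rcases hstep with hup | hdown
      · have hSle : (∑ l ∈ Finset.Icc 1 j, nullIn B (Vn l)) ≤ Vn j :=
          sum_le_submodule fun l hl =>
            le_trans nullIn_le (hmono (Finset.mem_Icc.mp hl).2)
        have hnot : ¬ nullIn B (Vn (j + 1)) ≤ Vn j := by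
          intro h
          have hh : nullIn B (Vn (j + 1)) ≤ nullIn B (Vn j) := by
            rintro x ⟨hxperp, hxV⟩
            exact ⟨fun u hu => hxperp u (hmono (by omega) hu), h ⟨hxperp, hxV⟩⟩
          have := Submodule.finrank_mono hh
          omega
        obtain ⟨x, hx, hx'⟩ := SetLike.not_le_iff_exists.mp hnot
        have hxS : x ∈ ∑ l ∈ Finset.Icc 1 (j + 1), nullIn B (Vn l) := by
          rw [hsum, Submodule.add_eq_sup]
          exact Submodule.mem_sup_right hx
        have hlt : (∑ l ∈ Finset.Icc 1 j, nullIn B (Vn l)) <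
            ∑ l ∈ Finset.Icc 1 (j + 1), nullIn B (Vn l) :=
          lt_of_le_of_ne hle fun he => hx' (hSle (he ▸ hxS))
        have := Submodule.finrank_lt_finrank_of_lt hlt
        omega
      · have := Submodule.finrank_mono hle
        omega
  have hlagrank : m + n ≤ 2 * finrank 𝕜 ↥(lagSumN m Vn B) := by
    have h := hSrank m le_rfl
    rw [hnVm] at h
    exact h
  have hfr : finrank 𝕜 ↥(lagSumN m Vn B) + d = m := by
    have hple := Submodule.finrank_mono hlag_le
    omega
  have heq : pSeq B Vn d = lagSumN m Vn B :=
    (Submodule.eq_of_le_of_finrank_le hlag_le (by omega)).symm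
  have hq1 := Submodule.finrank_quotient_add_finrank (lagSumN m Vn B)
  have hq2 := Submodule.finrank_quotient_add_finrank (nullSpace B)
  rw [hm] at hq1 hq2
  rw [← hn] at hq2
  refine ⟨by omega, by omega, heq, hd3, ?_⟩
  -- maximality among isotropic subspaces
  intro W hW
  let ψ : ↥W →ₗ[𝕜] Module.Dual 𝕜 V :=
    { toFun := fun x => ((B ↑x : V →L[𝕜] 𝕜) : V →ₗ[𝕜] 𝕜)
      map_add' := fun a b => by ext y; simp
      map_smul' := fun c a => by ext y; simp }
  have hrn := ψ.finrank_range_add_finrank_ker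
  have hrange : LinearMap.range ψ ≤ Submodule.dualAnnihilator W := by
    rintro f ⟨x, rfl⟩
    rw [Submodule.mem_dualAnnihilator]
    intro y hy
    exact hW ↑x x.2 y hy
  have hann : finrank 𝕜 ↥(Submodule.dualAnnihilator W) + finrank 𝕜 ↥W = m := by
    have h1 : finrank 𝕜 ↥(Submodule.dualAnnihilator W) = finrank 𝕜 (V ⧸ W) :=
      (Subspace.quotEquivAnnihilator W).finrank_eq.symm
    have h2 := Submodule.finrank_quotient_add_finrank W
    rw [hm] at h2
    omega
  have hra : finrank 𝕜 ↥(LinearMap.range ψ) ≤ finrank 𝕜 ↥(Submodule.dualAnnihilator W) :=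
    Submodule.finrank_mono hrange
  have hkerle : Submodule.map W.subtype (LinearMap.ker ψ) ≤ nullSpace B := by
    rintro y ⟨⟨x, hxW⟩, hx, rfl⟩
    intro v _
    have hx0 : ∀ u, B x u = 0 := fun u => by
      have h := DFunLike.congr_fun (LinearMap.mem_ker.mp hx) u
      simpa [ψ] using h
    show B v x = 0
    rw [hB v x, hx0 v, neg_zero]
  have hker2 : finrank 𝕜 ↥(LinearMap.ker ψ) ≤ n := by
    have h := Submodule.finrank_mono hkerle
    rwa [Submodule.finrank_map_subtype_eq, ← hn] at h
  omega
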